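/- Fix an integer g ≥ 1 and let (Q_1,…,Q_{g+1},W_1,…,W_{g+1}) ∈ ℝ^{2(g+1)} satisfy Σ_{i=1}^{g+1} Q_i < Σ_{i=1}^{g+1} W_i, and let (Q'_i, W'_i) be its image under the UD-pToda map. Then the minimum over all 2(g+1) coordinates is preserved: min(min_{1≤i≤g+1} Q'_i, min_{1≤i≤g+1} W'_i) = min(min_{1≤i≤g+1} Q_i, min_{1≤i≤g+1} W_i); that is, the conserved quantity C_g is invariant. -/

import Mathlib

open Fin.NatCast

/-- `X_i = min_{k=0,…,g} Σ_{l=1}^{k} (W_{i−l} − Q_{i−l})` of the ultra-discrete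
periodic Toda lattice (indices cyclic mod `g+1`; the `k = 0` term is `0`). -/
noncomputable def udX (g : ℕ) (Q W : Fin (g + 1) → ℝ) (i : Fin (g + 1)) : ℝ :=
  (Finset.range (g + 1)).inf' (Finset.nonempty_range_iff.mpr g.succ_ne_zero)
    fun k => ∑ l ∈ Finset.Icc 1 k,
      (W (i - (l : Fin (g + 1))) - Q (i - (l : Fin (g + 1))))

/-!
Every new coordinate is at least `C = min(min Q, min W)`, since `Q'_i ≤ W_i` and `X_i ≤ 0`.
Conversely the minimum is attained again: at a minimiser `j` of `W` we have `Q'_j ≤ W_j`, and at a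
minimiser `j` of `Q` either `X_j = 0`, so `Q'_j ≤ Q_j`, or `X_j < 0`. In the latter case the
minimum defining `X_j` is attained at some `k ≥ 1`, and peeling off the first summand shows
`X_{j-1} < Q_{j-1} - W_{j-1}`; hence `Q'_{j-1} = W_{j-1}` and `W'_{j-1} = Q_j`.
-/

open Finset

namespace UDPToda

variable {g : ℕ} (Q W : Fin (g + 1) → ℝ)

def partialSum (i : Fin (g + 1)) (k : ℕ) : ℝ :=
  ∑ l ∈ Icc 1 k, (W (i - (l : Fin (g + 1))) - Q (i - (l : Fin (g + 1))))

noncomputable def nextQ (i : Fin (g + 1)) : ℝ := min (W i) (Q i - udX g Q W i)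

noncomputable def nextW (i : Fin (g + 1)) : ℝ := Q (i + 1) + W i - nextQ Q W i

@[simp]
lemma partialSum_zero (i : Fin (g + 1)) : partialSum Q W i 0 = 0 := by
  simp [partialSum]

lemma partialSum_succ_top (i : Fin (g + 1)) (k : ℕ) :
    partialSum Q W i (k + 1) = partialSum Q W i k +
      (W (i - ((k + 1 : ℕ) : Fin (g + 1))) - Q (i - ((k + 1 : ℕ) : Fin (g + 1)))) :=
  sum_Icc_succ_top (Nat.le_add_left 1 k) _

lemma partialSum_succ (i : Fin (g + 1)) (k : ℕ) :
    partialSum Q W i (k + 1) = (W (i - 1) - Q (i - 1)) + partialSum Q W (i - 1) k := by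
  induction k with
  | zero => simp [partialSum]
  | succ k ih =>
    have hshift :
        i - ((k + 1 + 1 : ℕ) : Fin (g + 1)) = i - 1 - ((k + 1 : ℕ) : Fin (g + 1)) := by
      rw [sub_sub, add_comm (1 : Fin (g + 1)), Nat.cast_succ (k + 1)]
    rw [partialSum_succ_top, ih, partialSum_succ_top, hshift]
    ring

lemma udX_le_partialSum (i : Fin (g + 1)) {k : ℕ} (hk : k ≤ g) :
    udX g Q W i ≤ partialSum Q W i k :=
  inf'_le _ (mem_range.2 (Nat.lt_succ_of_le hk))

lemma exists_partialSum_eq_udX (i : Fin (g + 1)) :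
    ∃ k ≤ g, partialSum Q W i k = udX g Q W i := by
  obtain ⟨k, hk, hkeq⟩ := exists_mem_eq_inf' (nonempty_range_iff.mpr g.succ_ne_zero)
    (partialSum Q W i)
  exact ⟨k, Nat.le_of_lt_succ (mem_range.1 hk), hkeq.symm⟩

lemma udX_nonpos (i : Fin (g + 1)) : udX g Q W i ≤ 0 := by
  simpa using udX_le_partialSum Q W i (Nat.zero_le g)

lemma udX_pred_lt_of_udX_neg {i : Fin (g + 1)} (hi : udX g Q W i < 0) :
    udX g Q W (i - 1) < Q (i - 1) - W (i - 1) := by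
  obtain ⟨k, hk, hkeq⟩ := exists_partialSum_eq_udX Q W i
  obtain ⟨m, rfl⟩ : ∃ m, k = m + 1 :=
    Nat.exists_eq_succ_of_ne_zero (by rintro rfl; simp [← hkeq] at hi)
  have hm := udX_le_partialSum Q W (i - 1) (k := m) (by omega)
  rw [partialSum_succ] at hkeq
  linarith

lemma nextQ_le_W (i : Fin (g + 1)) : nextQ Q W i ≤ W i := min_le_left _ _

lemma le_nextQ {c : ℝ} {i : Fin (g + 1)} (hQ : c ≤ Q i) (hW : c ≤ W i) : c ≤ nextQ Q W i :=
  le_min hW (by linarith [udX_nonpos Q W i])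

lemma le_nextW {c : ℝ} {i : Fin (g + 1)} (hQ : c ≤ Q (i + 1)) : c ≤ nextW Q W i := by
  linarith [nextQ_le_W Q W i, show nextW Q W i = Q (i + 1) + W i - nextQ Q W i from rfl]

lemma nextQ_le_Q_or_nextW_pred_eq (j : Fin (g + 1)) :
    nextQ Q W j ≤ Q j ∨ nextW Q W (j - 1) = Q j := by
  rcases le_or_gt 0 (udX g Q W j) with hX | hX
  · exact Or.inl ((min_le_right _ _).trans (by linarith))
  · have hQ : nextQ Q W (j - 1) = W (j - 1) :=
      min_eq_left (by linarith [udX_pred_lt_of_udX_neg Q W hX])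
    right
    rw [nextW, hQ, sub_add_cancel]
    ring

end UDPToda

open UDPToda in
theorem udpToda_preserves_Cg_general (g : ℕ) (Q W Q' W' : Fin (g + 1) → ℝ)
    (hQ' : ∀ i : Fin (g + 1), Q' i = min (W i) (Q i - udX g Q W i))
    (hW' : ∀ i : Fin (g + 1), W' i = Q (i + 1) + W i - Q' i) :
    min (Finset.univ.inf' Finset.univ_nonempty Q')
        (Finset.univ.inf' Finset.univ_nonempty W') =
    min (Finset.univ.inf' Finset.univ_nonempty Q)
        (Finset.univ.inf' Finset.univ_nonempty W) := by
  obtain rfl : Q' = nextQ Q W := funext hQ'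
  obtain rfl : W' = nextW Q W := funext hW'
  have hQ_le (i) : (univ.inf' univ_nonempty (nextQ Q W)) ≤ nextQ Q W i := inf'_le _ (mem_univ i)
  have hW_le (i) : (univ.inf' univ_nonempty (nextW Q W)) ≤ nextW Q W i := inf'_le _ (mem_univ i)
  refine le_antisymm ?_ ?_
  · obtain ⟨j, -, hj⟩ := exists_mem_eq_inf' univ_nonempty Q
    obtain ⟨j', -, hj'⟩ := exists_mem_eq_inf' univ_nonempty W
    rw [hj, hj']
    refine le_min ?_ (min_le_of_left_le ((hQ_le j').trans (nextQ_le_W Q W j')))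
    rcases nextQ_le_Q_or_nextW_pred_eq Q W j with h | h
    · exact min_le_of_left_le ((hQ_le j).trans h)
    · exact min_le_of_right_le ((hW_le _).trans h.le)
  · have hCQ (i) : min (univ.inf' univ_nonempty Q) (univ.inf' univ_nonempty W) ≤ Q i :=
      min_le_of_left_le (inf'_le _ (mem_univ i))
    have hCW (i) : min (univ.inf' univ_nonempty Q) (univ.inf' univ_nonempty W) ≤ W i :=
      min_le_of_right_le (inf'_le _ (mem_univ i))
    exact le_min (le_inf' _ _ fun i _ => le_nextQ Q W (hCQ i) (hCW i))
      (le_inf' _ _ fun i _ => le_nextW Q W (hCQ (i + 1)))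

/-- The UD-pToda map preserves the conserved quantity
`C_g = min(min_i Q_i, min_i W_i)`. -/
theorem udpToda_preserves_Cg (g : ℕ) (hg : 1 ≤ g) (Q W Q' W' : Fin (g + 1) → ℝ)
    (h : (∑ i, Q i) < ∑ i, W i)
    (hQ' : ∀ i : Fin (g + 1), Q' i = min (W i) (Q i - udX g Q W i))
    (hW' : ∀ i : Fin (g + 1), W' i = Q (i + 1) + W i - Q' i) :
    min (Finset.univ.inf' Finset.univ_nonempty Q')
        (Finset.univ.inf' Finset.univ_nonempty W') =
    min (Finset.univ.inf' Finset.univ_nonempty Q)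
        (Finset.univ.inf' Finset.univ_nonempty W) :=
  udpToda_preserves_Cg_general g Q W Q' W' hQ' hW'
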